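/- Let H be an undirected weighted graph on the same vertex set as G such that w_H(A_i, B_i) \ge \alpha \cdot w_G(A_i, B_i) and \beta_1 vol_G(S) \le vol_H(S) \le \beta_2 vol_G(S) for all S \subseteq V, for constants \alpha, \beta_1, \beta_2 > 0, where (A_1,B_1),...,(A_k,B_k) are the optimal pairs achieving \bar{\rho}_G(k). Then \bar{\rho}_H(k) \ge (\alpha/\beta_2) \cdot \bar{\rho}_G(k). -/

import Mathlib

open Finset

/-- Total weight of edges between two vertex sets. -/
def cutW {V : Type*} (w : V → V → ℝ) (A B : Finset V) : ℝ :=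
  ∑ u ∈ A, ∑ v ∈ B, w u v

/-- Volume of a vertex set. -/
def volW {V : Type*} [Fintype V] (w : V → V → ℝ) (S : Finset V) : ℝ :=
  ∑ u ∈ S, ∑ v, w u v

/-- Bipartiteness ratio `\overline{φ}(A,B) = 2 w(A,B) / vol(A ∪ B)`. -/
noncomputable def phiBar {V : Type*} [Fintype V] [DecidableEq V]
    (w : V → V → ℝ) (A B : Finset V) : ℝ :=
  2 * cutW w A B / volW w (A ∪ B)

/-- A valid family of `k` pairs for the `k`-way dual Cheeger constant. -/
def ValidPairs {V : Type*} [DecidableEq V] {k : ℕ}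
    (P : Fin k → Finset V × Finset V) : Prop :=
  (∀ i j, i ≠ j →
      Disjoint (P i).1 (P j).1 ∧ Disjoint (P i).2 (P j).2 ∧
        Disjoint (P i).1 (P j).2) ∧
  (∀ i, Disjoint (P i).1 (P i).2 ∧ ((P i).1 ∪ (P i).2).Nonempty)

/-- The `k`-way dual Cheeger constant. -/
noncomputable def rhoBar {V : Type*} [Fintype V] [DecidableEq V]
    (w : V → V → ℝ) (k : ℕ) : ℝ :=
  sSup {x : ℝ | ∃ P : Fin k → Finset V × Finset V,
    ValidPairs P ∧ x = ⨅ i, phiBar w (P i).1 (P i).2}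

lemma cutW_nonneg {V : Type*} (w : V → V → ℝ) (hw : ∀ u v, 0 ≤ w u v)
    (A B : Finset V) : 0 ≤ cutW w A B :=
  sum_nonneg fun u _ => sum_nonneg fun v _ => hw u v

lemma cutW_le_volW {V : Type*} [Fintype V] {w : V → V → ℝ} (hw : ∀ u v, 0 ≤ w u v)
    (A B : Finset V) : cutW w A B ≤ volW w A :=
  sum_le_sum fun u _ => sum_le_univ_sum_of_nonneg fun v => hw u v

lemma volW_mono {V : Type*} [Fintype V] {w : V → V → ℝ} (hw : ∀ u v, 0 ≤ w u v)
    {S T : Finset V} (hST : S ⊆ T) : volW w S ≤ volW w T :=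
  sum_le_sum_of_subset_of_nonneg hST fun u _ _ => sum_nonneg fun v _ => hw u v

lemma cutW_le_volW_union {V : Type*} [Fintype V] [DecidableEq V] {w : V → V → ℝ}
    (hw : ∀ u v, 0 ≤ w u v) (A B : Finset V) : cutW w A B ≤ volW w (A ∪ B) :=
  (cutW_le_volW hw A B).trans (volW_mono hw subset_union_left)

-- Since `c / 0 = 0`, the case `d = 0` needs `c = 0`.
lemma div_le_div_of_le_of_le {a b c d : ℝ} (hc : 0 ≤ c) (hd : 0 ≤ d) (hcd : d = 0 → c = 0)
    (hac : a ≤ c) (hdb : d ≤ b) : a / b ≤ c / d := by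
  rcases hd.eq_or_lt with hd | hd
  · rw [← hd, div_zero]
    exact div_nonpos_of_nonpos_of_nonneg (hcd hd.symm ▸ hac) (hd ▸ hdb)
  · exact div_le_div₀ hc hac hd hdb

lemma phiBar_mul_le_phiBar {V : Type*} [Fintype V] [DecidableEq V] {wG wH : V → V → ℝ}
    (hH : ∀ u v, 0 ≤ wH u v) {α β : ℝ} {A B : Finset V}
    (hcut : α * cutW wG A B ≤ cutW wH A B) (hvol : volW wH (A ∪ B) ≤ β * volW wG (A ∪ B)) :
    α / β * phiBar wG A B ≤ phiBar wH A B := by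
  have hcutH := cutW_nonneg wH hH A B
  have hcut_le_vol := cutW_le_volW_union hH A B
  rw [phiBar, phiBar, div_mul_div_comm]
  exact div_le_div_of_le_of_le (by positivity) (hcutH.trans hcut_le_vol)
    (fun h0 => by linarith) (by linarith) hvol

lemma mul_iInf_le_iInf_of_finite {ι : Type*} [Finite ι] {f g : ι → ℝ} {c : ℝ} (hc : 0 ≤ c)
    (h : ∀ i, c * f i ≤ g i) : c * ⨅ i, f i ≤ ⨅ i, g i := by
  rw [Real.mul_iInf_of_nonneg hc]
  exact ciInf_mono (Set.finite_range _).bddBelow h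

lemma iInf_phiBar_le_rhoBar {V : Type*} [Fintype V] [DecidableEq V] (w : V → V → ℝ) {k : ℕ}
    {P : Fin k → Finset V × Finset V} (hP : ValidPairs P) :
    ⨅ i, phiBar w (P i).1 (P i).2 ≤ rhoBar w k := by
  refine le_csSup ?_ ⟨P, hP, rfl⟩
  refine ((Set.finite_range fun Q : Fin k → Finset V × Finset V =>
    ⨅ i, phiBar w (Q i).1 (Q i).2).subset ?_).bddAbove
  rintro x ⟨Q, -, rfl⟩
  exact ⟨Q, rfl⟩

theorem dual_cheeger_preserved_general
    {V : Type*} [Fintype V] [DecidableEq V]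
    (wG wH : V → V → ℝ)
    (hHnn : ∀ u v, 0 ≤ wH u v)
    (k : ℕ)
    (α β₁ β₂ : ℝ) (hα : 0 < α) (hβ₂ : 0 < β₂)
    (P : Fin k → Finset V × Finset V) (hP : ValidPairs P)
    (hopt : (⨅ i, phiBar wG (P i).1 (P i).2) = rhoBar wG k)
    (hcut : ∀ i, α * cutW wG (P i).1 (P i).2 ≤ cutW wH (P i).1 (P i).2)
    (hvol : ∀ S : Finset V, β₁ * volW wG S ≤ volW wH S ∧
        volW wH S ≤ β₂ * volW wG S) :
    (α / β₂) * rhoBar wG k ≤ rhoBar wH k :=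
  calc (α / β₂) * rhoBar wG k = (α / β₂) * ⨅ i, phiBar wG (P i).1 (P i).2 := by rw [hopt]
    _ ≤ ⨅ i, phiBar wH (P i).1 (P i).2 :=
      mul_iInf_le_iInf_of_finite (by positivity) fun i =>
        phiBar_mul_le_phiBar hHnn (hcut i) (hvol _).2
    _ ≤ rhoBar wH k := iInf_phiBar_le_rhoBar wH hP

/-- If `H` (on the same vertex set as `G`) preserves the optimal cuts up to a
factor `α` and all volumes up to factors `β₁, β₂`, then
`\bar{ρ}_H(k) ≥ (α/β₂) \bar{ρ}_G(k)`. -/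
theorem dual_cheeger_preserved
    {V : Type*} [Fintype V] [DecidableEq V]
    (wG wH : V → V → ℝ)
    (hGsym : ∀ u v, wG u v = wG v u) (hGnn : ∀ u v, 0 ≤ wG u v)
    (hHsym : ∀ u v, wH u v = wH v u) (hHnn : ∀ u v, 0 ≤ wH u v)
    (k : ℕ) (hk : 0 < k)
    (α β₁ β₂ : ℝ) (hα : 0 < α) (hβ₁ : 0 < β₁) (hβ₂ : 0 < β₂)
    (P : Fin k → Finset V × Finset V) (hP : ValidPairs P)
    (hopt : (⨅ i, phiBar wG (P i).1 (P i).2) = rhoBar wG k)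
    (hcut : ∀ i, α * cutW wG (P i).1 (P i).2 ≤ cutW wH (P i).1 (P i).2)
    (hvol : ∀ S : Finset V, β₁ * volW wG S ≤ volW wH S ∧
        volW wH S ≤ β₂ * volW wG S) :
    (α / β₂) * rhoBar wG k ≤ rhoBar wH k :=
  dual_cheeger_preserved_general wG wH hHnn k α β₁ β₂ hα hβ₂ P hP hopt hcut hvol
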